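/- For ρ > 0 set δ_ρ := (ρe − 1)/(2√(e² + 1)). Then: (i) for every ρ ∈ [0.95, (1 + √(1 + e²))/e], the supremum of |w/(w−1)| over all w ∈ ℂ with dist(w, Σ₁) ≥ δ_ρ and Re(w) ≤ δ_ρ is at most 1; and (ii) for every ρ ∈ ((1 + √(1 + e²))/e, 2], the same supremum is at most 1.39. -/

import Mathlib

/-- The Szegő region `Σ₁ = {z ∈ ℂ : |z e^{1-z}| ≤ 1} ∩ D₁`. -/
noncomputable def Szego : Set ℂ :=
  {z : ℂ | ‖z * Complex.exp (1 - z)‖ ≤ 1} ∩ {z : ℂ | ‖z‖ ≤ 1}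

/-- `δ_ρ = (ρ e - 1)/(2 √(e² + 1))`. -/
noncomputable def deltaRho (ρ : ℝ) : ℝ :=
  (ρ * Real.exp 1 - 1) / (2 * Real.sqrt (Real.exp 1 ^ 2 + 1))

/-!
The threshold `(1 + √(1 + e²))/e` is exactly the `ρ` with `δ_ρ = 1/2`. Below it the
constraint `Re w ≤ δ_ρ` puts `w` in the half-plane `Re w ≤ 1/2`, where `|w| ≤ |w - 1|`.
Above it, for `ρ ≤ 2` we still have `δ_ρ ≤ 5/6`; when `1/2 < Re w ≤ δ_ρ` the real point
`Re w ∈ [0, 1]` lies in `Σ₁`, so `|Im w| ≥ δ := δ_ρ`, and `|w|²/|w - 1|²` is then at most its value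
at `w = δ + iδ`, namely `2δ²/((1 - δ)² + δ²) ≤ 25/13 < 1.39²`.
-/

open Complex

lemma ofReal_mem_szego {x : ℝ} (hx0 : 0 ≤ x) (hx1 : x ≤ 1) : (x : ℂ) ∈ Szego := by
  refine ⟨?_, by simpa [abs_of_nonneg hx0] using hx1⟩
  show ‖(x : ℂ) * exp (1 - x)‖ ≤ 1
  have hre : ((1 : ℂ) - x).re = 1 - x := by simp
  rw [norm_mul, norm_exp, hre, Complex.norm_of_nonneg hx0]
  calc x * Real.exp (1 - x) ≤ Real.exp (x - 1) * Real.exp (1 - x) := by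
        gcongr; linarith [Real.add_one_le_exp (x - 1)]
    _ = 1 := by rw [← Real.exp_add]; simp

lemma infDist_szego_le_abs_im {w : ℂ} (h0 : 0 ≤ w.re) (h1 : w.re ≤ 1) :
    Metric.infDist w Szego ≤ |w.im| := by
  have hdist : dist w (w.re : ℂ) = |w.im| := by
    rw [dist_of_re_eq (by simp), ofReal_im, Real.dist_eq, sub_zero]
  exact hdist ▸ Metric.infDist_le_dist_of_mem (ofReal_mem_szego h0 h1)

lemma norm_le_norm_sub_one_of_re_le_half {w : ℂ} (h : w.re ≤ 1 / 2) : ‖w‖ ≤ ‖w - 1‖ := by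
  rw [← sq_le_sq₀ (norm_nonneg _) (norm_nonneg _), Complex.sq_norm, Complex.sq_norm, normSq_apply,
    normSq_apply]
  simp only [sub_re, sub_im, one_re, one_im, sub_zero]
  nlinarith

lemma norm_le_mul_norm_sub_one_of_abs_im_ge {w : ℂ} {δ : ℝ} (hδ0 : 0 ≤ δ) (hδ : δ ≤ 5 / 6)
    (hre : w.re ≤ δ) (him : δ ≤ |w.im|) : ‖w‖ ≤ 1.39 * ‖w - 1‖ := by
  have him2 : δ ^ 2 ≤ w.im ^ 2 := by simpa only [sq_abs] using pow_le_pow_left₀ hδ0 him 2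
  rw [← sq_le_sq₀ (norm_nonneg _) (by positivity), mul_pow, Complex.sq_norm, Complex.sq_norm, normSq_apply,
    normSq_apply]
  simp only [sub_re, sub_im, one_re, one_im, sub_zero]
  nlinarith [mul_nonneg (sub_nonneg.2 hre) (sub_nonneg.2 hδ)]

lemma norm_div_sub_one_le {w : ℂ} {c : ℝ} (hc : 0 ≤ c) (h : ‖w‖ ≤ c * ‖w - 1‖) :
    ‖w / (w - 1)‖ ≤ c := by
  rw [norm_div]
  exact div_le_of_le_mul₀ (norm_nonneg _) hc h

lemma deltaRho_strictMono : StrictMono deltaRho := fun a b hab => by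
  unfold deltaRho
  gcongr

lemma deltaRho_threshold :
    deltaRho ((1 + Real.sqrt (1 + Real.exp 1 ^ 2)) / Real.exp 1) = 1 / 2 := by
  have hs : 0 < Real.sqrt (Real.exp 1 ^ 2 + 1) := by positivity
  rw [deltaRho, div_mul_cancel₀ _ (Real.exp_pos 1).ne', add_sub_cancel_left, add_comm 1]
  field_simp

lemma deltaRho_le_half_iff {ρ : ℝ} :
    deltaRho ρ ≤ 1 / 2 ↔ ρ ≤ (1 + Real.sqrt (1 + Real.exp 1 ^ 2)) / Real.exp 1 := by
  rw [← deltaRho_threshold, deltaRho_strictMono.le_iff_le]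

lemma deltaRho_two_le : deltaRho 2 ≤ 5 / 6 := by
  have he : Real.exp 1 ≤ Real.sqrt (Real.exp 1 ^ 2 + 1) :=
    Real.le_sqrt_of_sq_le (by linarith)
  rw [deltaRho, div_le_iff₀ (by positivity)]
  linarith [Real.exp_one_lt_three]

/-- Bounds on the supremum of `|w/(w-1)|` over `w` with `dist(w, Σ₁) ≥ δ_ρ` and
`Re(w) ≤ δ_ρ`: at most `1` for `ρ ∈ [0.95, (1+√(1+e²))/e]`, and at most `1.39`
for `ρ ∈ ((1+√(1+e²))/e, 2]`. -/
theorem sup_abs_w_div_w_sub_one_bounds :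
    (∀ ρ : ℝ, 0.95 ≤ ρ → ρ ≤ (1 + Real.sqrt (1 + Real.exp 1 ^ 2)) / Real.exp 1 →
      ∀ w : ℂ, deltaRho ρ ≤ Metric.infDist w Szego → w.re ≤ deltaRho ρ →
        ‖w / (w - 1)‖ ≤ 1) ∧
    (∀ ρ : ℝ, (1 + Real.sqrt (1 + Real.exp 1 ^ 2)) / Real.exp 1 < ρ → ρ ≤ 2 →
      ∀ w : ℂ, deltaRho ρ ≤ Metric.infDist w Szego → w.re ≤ deltaRho ρ →
        ‖w / (w - 1)‖ ≤ 1.39) := by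
  constructor
  · intro ρ _ hρ w _ hre
    refine norm_div_sub_one_le zero_le_one ?_
    rw [one_mul]
    exact norm_le_norm_sub_one_of_re_le_half (hre.trans (deltaRho_le_half_iff.2 hρ))
  · intro ρ hρ hρ2 w hdist hre
    have hδ : 1 / 2 < deltaRho ρ := not_le.1 (mt deltaRho_le_half_iff.1 (not_le.2 hρ))
    have hδ' : deltaRho ρ ≤ 5 / 6 := (deltaRho_strictMono.monotone hρ2).trans deltaRho_two_le
    refine norm_div_sub_one_le (by norm_num) ?_
    rcases le_or_gt w.re (1 / 2) with hx | hx
    · have := norm_le_norm_sub_one_of_re_le_half hx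
      nlinarith [norm_nonneg (w - 1)]
    · have him := hdist.trans (infDist_szego_le_abs_im (by linarith) (by linarith))
      exact norm_le_mul_norm_sub_one_of_abs_im_ge (by linarith) hδ' hre him
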